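/- arXiv:2312.02565 — 6 statements merged into one kernel-verified Lean document; each statement's English description precedes it below -/
import Mathlib

section
/- Let a, b > 0. There exists a constant C > 0 such that for all δ ∈ (0,1), the Lebesgue measure of the set {(x,y) ∈ [-δ^{1/3}, δ^{1/3}]² : |a·x² - b·y²| ≤ δ} is at least -C·δ·log(δ). -/
/-!
In the coordinates `P = √a x - √b y`, `Q = √a x + √b y` the form `a x² - b y²` becomes `P Q`,
and the change of variables has determinant `2 √a √b`. Inside the square `[0, R]²` the set
`{P Q ≤ ε}` contains the subgraph of `x ↦ ε / (x + ε / R)` over `[0, R]`, whose area is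
`ε log (1 + R² / ε)`. With `t = δ^(1/3)`, `k = min 1 (min √a √b)`, `R = k t` and `ε = k² δ`,
the square fits in `[-t, t]²` in the original coordinates, and
`log (1 + R² / ε) = log (1 + δ^(-1/3)) ≥ -(log δ) / 3`.
-/

open MeasureTheory Set Real

noncomputable def lightCone (u v : ℝ) : ℝ × ℝ →ₗ[ℝ] ℝ × ℝ :=
  (u • LinearMap.fst ℝ ℝ ℝ - v • LinearMap.snd ℝ ℝ ℝ).prod
    (u • LinearMap.fst ℝ ℝ ℝ + v • LinearMap.snd ℝ ℝ ℝ)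

@[simp] lemma lightCone_apply (u v : ℝ) (p : ℝ × ℝ) :
    lightCone u v p = (u * p.1 - v * p.2, u * p.1 + v * p.2) := rfl

lemma det_lightCone (u v : ℝ) : LinearMap.det (lightCone u v) = 2 * u * v := by
  rw [← LinearMap.det_toMatrix (Module.Basis.finTwoProd ℝ), Matrix.det_fin_two]
  simp [LinearMap.toMatrix_apply]
  ring

lemma volume_preimage_lightCone {u v : ℝ} (hu : 0 < u) (hv : 0 < v) (s : Set (ℝ × ℝ)) :
    volume (lightCone u v ⁻¹' s) = ENNReal.ofReal (2 * u * v)⁻¹ * volume s := by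
  have hdet : LinearMap.det (lightCone u v) = 2 * u * v := det_lightCone u v
  rw [Measure.addHaar_preimage_linearMap _ (by rw [hdet]; positivity), hdet,
    abs_of_pos (by positivity)]

lemma integral_div_add_eq_mul_log (δ : ℝ) {c R : ℝ} (hc : 0 < c) (hR : 0 ≤ R) :
    ∫ x in (0)..R, δ / (x + c) = δ * log (1 + R / c) := by
  simp only [div_eq_mul_inv, intervalIntegral.integral_const_mul]
  rw [intervalIntegral.integral_comp_add_right (fun x => x⁻¹), zero_add,
    integral_inv_of_pos hc (by linarith)]
  congr 2
  field_simp
  ring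

lemma ofReal_mul_log_one_add_le_volume_mul_le {R δ : ℝ} (hR : 0 < R) (hδ : 0 < δ) :
    ENNReal.ofReal (δ * log (1 + R ^ 2 / δ)) ≤
      volume {p : ℝ × ℝ | p.1 ∈ Icc 0 R ∧ p.2 ∈ Icc 0 R ∧ p.1 * p.2 ≤ δ} := by
  have hc : 0 < δ / R := div_pos hδ hR
  set φ : ℝ → ℝ := fun x => δ / (x + δ / R)
  have hsub : regionBetween 0 φ (Icc 0 R) ⊆
      {p : ℝ × ℝ | p.1 ∈ Icc 0 R ∧ p.2 ∈ Icc 0 R ∧ p.1 * p.2 ≤ δ} := by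
    rintro ⟨x, y⟩ ⟨hx, hy0, hyφ⟩
    simp only [Pi.zero_apply, φ] at hy0 hyφ
    have hxc : 0 < x + δ / R := by linarith [hx.1]
    refine ⟨hx, ⟨hy0.le, ?_⟩, ?_⟩
    · calc y ≤ δ / (x + δ / R) := hyφ.le
        _ ≤ δ / (δ / R) := by gcongr; linarith [hx.1]
        _ = R := div_div_cancel₀ hδ.ne'
    · rw [lt_div_iff₀ hxc] at hyφ
      nlinarith [hx.1]
  have hφ : ContinuousOn φ (Icc 0 R) :=
    continuousOn_const.div (by fun_prop) fun x hx => by linarith [hx.1]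
  have hvol := volume_regionBetween_eq_integral (μ := volume) (f := 0) integrableOn_zero
    hφ.integrableOn_Icc measurableSet_Icc fun x hx => (div_pos hδ (by linarith [hx.1])).le
  have hint : ∫ x in Icc 0 R, (φ - 0) x = δ * log (1 + R ^ 2 / δ) := by
    rw [sub_zero, integral_Icc_eq_integral_Ioc, ← intervalIntegral.integral_of_le hR.le,
      integral_div_add_eq_mul_log δ hc hR.le, div_div_eq_mul_div, ← sq]
  rw [← Measure.volume_eq_prod, hint] at hvol
  exact hvol ▸ measure_mono hsub

lemma lightCone_preimage_subset {a b t R ε δ : ℝ} (ha : 0 < a) (hb : 0 < b)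
    (hRa : R ≤ √a * t) (hRb : R ≤ √b * t) (hεδ : ε ≤ δ) :
    lightCone √a √b ⁻¹' {p : ℝ × ℝ | p.1 ∈ Icc 0 R ∧ p.2 ∈ Icc 0 R ∧ p.1 * p.2 ≤ ε} ⊆
      {p : ℝ × ℝ | p.1 ∈ Icc (-t) t ∧ p.2 ∈ Icc (-t) t ∧ |a * p.1 ^ 2 - b * p.2 ^ 2| ≤ δ} := by
  rintro ⟨x, y⟩ ⟨⟨hP0, hPR⟩, ⟨hQ0, hQR⟩, hPQ⟩
  dsimp only [lightCone_apply] at hP0 hPR hQ0 hQR hPQ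
  have hsa : 0 < √a := sqrt_pos.2 ha
  have hsb : 0 < √b := sqrt_pos.2 hb
  have hfactor : a * x ^ 2 - b * y ^ 2 = (√a * x - √b * y) * (√a * x + √b * y) := by
    linear_combination (-x ^ 2) * sq_sqrt ha.le + y ^ 2 * sq_sqrt hb.le
  refine ⟨⟨?_, ?_⟩, ⟨?_, ?_⟩, ?_⟩
  · nlinarith
  · nlinarith
  · nlinarith
  · nlinarith
  · rw [hfactor, abs_of_nonneg (mul_nonneg hP0 hQ0)]
    exact hPQ.trans hεδ

lemma ofReal_mul_log_one_add_le_volume_abs_sub_le {a b t R ε δ : ℝ} (ha : 0 < a) (hb : 0 < b)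
    (hR : 0 < R) (hRa : R ≤ √a * t) (hRb : R ≤ √b * t) (hε : 0 < ε) (hεδ : ε ≤ δ) :
    ENNReal.ofReal ((2 * √a * √b)⁻¹ * (ε * log (1 + R ^ 2 / ε))) ≤
      volume {p : ℝ × ℝ | p.1 ∈ Icc (-t) t ∧ p.2 ∈ Icc (-t) t ∧
        |a * p.1 ^ 2 - b * p.2 ^ 2| ≤ δ} := by
  rw [ENNReal.ofReal_mul (by positivity)]
  calc ENNReal.ofReal (2 * √a * √b)⁻¹ * ENNReal.ofReal (ε * log (1 + R ^ 2 / ε))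
      ≤ ENNReal.ofReal (2 * √a * √b)⁻¹ *
          volume {p : ℝ × ℝ | p.1 ∈ Icc 0 R ∧ p.2 ∈ Icc 0 R ∧ p.1 * p.2 ≤ ε} := by
        gcongr
        exact ofReal_mul_log_one_add_le_volume_mul_le hR hε
    _ = volume (lightCone √a √b ⁻¹'
          {p : ℝ × ℝ | p.1 ∈ Icc 0 R ∧ p.2 ∈ Icc 0 R ∧ p.1 * p.2 ≤ ε}) :=
        (volume_preimage_lightCone (sqrt_pos.2 ha) (sqrt_pos.2 hb) _).symm
    _ ≤ _ := measure_mono (lightCone_preimage_subset ha hb hRa hRb hεδ)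

lemma neg_log_le_three_mul_log_one_add {δ : ℝ} (hδ : 0 < δ) :
    -log δ ≤ 3 * log (1 + (δ ^ ((1 : ℝ) / 3)) ^ 2 / δ) := by
  have ht : 0 < (δ ^ ((1 : ℝ) / 3)) ^ 2 / δ := by positivity
  have hlog : log ((δ ^ ((1 : ℝ) / 3)) ^ 2 / δ) = -(1 / 3) * log δ := by
    rw [log_div (by positivity) hδ.ne', log_pow, log_rpow hδ]
    push_cast; ring
  have := log_le_log ht (lt_one_add _).le
  linarith

theorem volume_lower_bound_difference_of_squares (a b : ℝ) (ha : 0 < a) (hb : 0 < b) :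
    ∃ C > (0:ℝ), ∀ δ : ℝ, δ ∈ Set.Ioo (0:ℝ) 1 →
      ENNReal.ofReal (-C * δ * Real.log δ) ≤
        volume {p : ℝ × ℝ | p.1 ∈ Set.Icc (-(δ ^ ((1:ℝ)/3))) (δ ^ ((1:ℝ)/3)) ∧
          p.2 ∈ Set.Icc (-(δ ^ ((1:ℝ)/3))) (δ ^ ((1:ℝ)/3)) ∧
          |a * p.1 ^ 2 - b * p.2 ^ 2| ≤ δ} := by
  set k := min 1 (min √a √b)
  have hk : 0 < k := lt_min one_pos (lt_min (sqrt_pos.2 ha) (sqrt_pos.2 hb))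
  refine ⟨k ^ 2 / (6 * √a * √b), by positivity, fun δ ⟨hδ, _⟩ => ?_⟩
  set t := δ ^ ((1 : ℝ) / 3)
  have ht : 0 < t := by positivity
  refine le_trans (ENNReal.ofReal_le_ofReal ?_)
    (ofReal_mul_log_one_add_le_volume_abs_sub_le (R := k * t) (ε := k ^ 2 * δ) ha hb
      (by positivity) (by gcongr; exact (min_le_right _ _).trans (min_le_left _ _))
      (by gcongr; exact (min_le_right _ _).trans (min_le_right _ _)) (by positivity)
      (mul_le_of_le_one_left hδ.le (pow_le_one₀ hk.le (min_le_left _ _))))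
  rw [mul_pow, mul_div_mul_left _ _ (by positivity)]
  calc -(k ^ 2 / (6 * √a * √b)) * δ * log δ = k ^ 2 * δ / (6 * √a * √b) * -log δ := by ring
    _ ≤ k ^ 2 * δ / (6 * √a * √b) * (3 * log (1 + t ^ 2 / δ)) := by
      gcongr; exact neg_log_le_three_mul_log_one_add hδ
    _ = _ := by field_simp; ring
end

section
/- Let Q be a positive definite quadratic form on ℝ^p and let R be a quadratic form on ℝ^p × ℝ^n whose restriction to {0} × ℝ^n is positive definite. Then there exists κ > 0 such that the quadratic form (x,y) ↦ κ·Q(x) + R(x,y) is positive definite on ℝ^p × ℝ^n. -/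
/-- Any bilinear map on finite-dimensional real spaces satisfies a bound
`|L x y| ≤ C * ‖x‖ * ‖y‖` with `C > 0`. -/
lemma aux_bilin_bound {E F : Type*} [NormedAddCommGroup E] [NormedSpace ℝ E]
    [FiniteDimensional ℝ E] [NormedAddCommGroup F] [NormedSpace ℝ F]
    [FiniteDimensional ℝ F] (L : E →ₗ[ℝ] F →ₗ[ℝ] ℝ) :
    ∃ C > (0:ℝ), ∀ x y, |L x y| ≤ C * ‖x‖ * ‖y‖ := by
  let L2 : E →ₗ[ℝ] (F →L[ℝ] ℝ) :=
    (LinearMap.toContinuousLinearMap : (F →ₗ[ℝ] ℝ) ≃ₗ[ℝ] (F →L[ℝ] ℝ)).toLinearMap.comp L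
  let L3 : E →L[ℝ] (F →L[ℝ] ℝ) := LinearMap.toContinuousLinearMap L2
  refine ⟨‖L3‖ + 1, by positivity, fun x y => ?_⟩
  have h := ContinuousLinearMap.le_opNorm₂ L3 x y
  have hxy : (L3 x) y = L x y := rfl
  rw [hxy] at h
  have : |L x y| = ‖L x y‖ := rfl
  rw [this]
  calc ‖L x y‖ ≤ ‖L3‖ * ‖x‖ * ‖y‖ := h
    _ ≤ (‖L3‖ + 1) * ‖x‖ * ‖y‖ := by
        have : (0:ℝ) ≤ ‖x‖ * ‖y‖ := by positivity
        nlinarith [norm_nonneg x, norm_nonneg y]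

/-- A positive definite quadratic form on a finite-dimensional real space is coercive. -/
lemma aux_coercive {E : Type*} [NormedAddCommGroup E] [NormedSpace ℝ E]
    [FiniteDimensional ℝ E] (Q : QuadraticForm ℝ E)
    (h : ∀ x : E, x ≠ 0 → 0 < Q x) :
    ∃ q > (0:ℝ), ∀ x : E, q * ‖x‖ ^ 2 ≤ Q x := by
  -- continuity of Q
  obtain ⟨C, hC, hCle⟩ := aux_bilin_bound (QuadraticMap.polarBilin Q)
  have hQcont : Continuous Q := by
    let L2 : E →ₗ[ℝ] (E →L[ℝ] ℝ) :=
      (LinearMap.toContinuousLinearMap : (E →ₗ[ℝ] ℝ) ≃ₗ[ℝ] (E →L[ℝ] ℝ)).toLinearMap.comp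
        (QuadraticMap.polarBilin Q)
    let L3 : E →L[ℝ] (E →L[ℝ] ℝ) := LinearMap.toContinuousLinearMap L2
    have hfun : ∀ x : E, Q x = (1/2 : ℝ) * (L3 x x) := by
      intro x
      have : (L3 x) x = QuadraticMap.polar Q x x := rfl
      rw [this, QuadraticMap.polar_self]
      push_cast
      ring
    have : Continuous fun x : E => (1/2 : ℝ) * (L3 x x) := by
      apply Continuous.mul continuous_const
      exact L3.continuous₂.comp (continuous_id.prodMk continuous_id)
    exact (funext hfun : ⇑Q = _) ▸ this
  rcases subsingleton_or_nontrivial E with hE | hE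
  · refine ⟨1, one_pos, fun x => ?_⟩
    have hx0 : x = 0 := Subsingleton.elim x 0
    simp [hx0]
  · -- the sphere is compact and nonempty
    have hsc : IsCompact (Metric.sphere (0:E) 1) := isCompact_sphere 0 1
    have hsn : (Metric.sphere (0:E) 1).Nonempty :=
      NormedSpace.sphere_nonempty.mpr zero_le_one
    obtain ⟨z, hz, hzmin⟩ := hsc.exists_isMinOn hsn hQcont.continuousOn
    have hz1 : ‖z‖ = 1 := by simpa using hz
    have hzne : z ≠ 0 := by
      intro h0; rw [h0, norm_zero] at hz1; exact zero_ne_one hz1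
    refine ⟨Q z, h z hzne, fun x => ?_⟩
    rcases eq_or_ne x 0 with hx | hx
    · simp [hx]
    · have hxn : (0:ℝ) < ‖x‖ := norm_pos_iff.mpr hx
      set u : E := ‖x‖⁻¹ • x with hu
      have hun : u ∈ Metric.sphere (0:E) 1 := by
        simp [hu, norm_smul, abs_of_pos (inv_pos.mpr hxn), inv_mul_cancel₀ hxn.ne']
      have hx_eq : x = ‖x‖ • u := by
        rw [hu, smul_smul, mul_inv_cancel₀ hxn.ne', one_smul]
      have hQsm : Q x = (‖x‖ * ‖x‖) • Q u := by
        conv_lhs => rw [hx_eq]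
        exact Q.map_smul _ u
      rw [hQsm, smul_eq_mul]
      have hqu : Q z ≤ Q u := hzmin hun
      nlinarith [sq_nonneg ‖x‖]

lemma aux_arith {q c C1 C2 κ X Y QX R1 R2 P : ℝ} (hq : 0 < q) (hc : 0 < c)
    (hκq : κ * (c * q) = c * C1 + C2 ^ 2 + c) (hκ : 0 < κ)
    (h0 : κ * (q * X ^ 2) ≤ κ * QX) (h1 : -(C1 * X ^ 2) ≤ R1) (h2 : c * Y ^ 2 ≤ R2)
    (h3 : -(C2 * X * Y) ≤ P) (hX : 0 ≤ X) (hY : 0 ≤ Y) (hxy : 0 < X ∨ 0 < Y) :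
    0 < κ * QX + (R1 + R2 + P) := by
  have key : 0 < c * (κ * (q * X ^ 2) - C1 * X ^ 2 + c * Y ^ 2 - C2 * X * Y) := by
    have expand : c * (κ * (q * X ^ 2) - C1 * X ^ 2 + c * Y ^ 2 - C2 * X * Y)
        = (C2 * X - c * Y / 2) ^ 2 + (3 / 4) * (c * Y) ^ 2 + c * X ^ 2 := by
      have h5 : c * (κ * (q * X ^ 2)) = (κ * (c * q)) * X ^ 2 := by ring
      have h6 : (κ * (c * q)) * X ^ 2 = (c * C1 + C2 ^ 2 + c) * X ^ 2 := by rw [hκq]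
      nlinarith [h5, h6]
    rw [expand]
    rcases hxy with hX' | hY'
    · have h4 : 0 < c * X ^ 2 := by positivity
      nlinarith [sq_nonneg (C2 * X - c * Y / 2), sq_nonneg (c * Y)]
    · have h4 : 0 < (3 / 4) * (c * Y) ^ 2 := by positivity
      nlinarith [sq_nonneg (C2 * X - c * Y / 2), mul_nonneg hc.le (sq_nonneg X)]
  have hE : 0 < κ * (q * X ^ 2) - C1 * X ^ 2 + c * Y ^ 2 - C2 * X * Y := by
    nlinarith [key]
  linarith [hE, h0, h1, h2, h3]

theorem posdef_perturbation (p n : ℕ) (Q : QuadraticForm ℝ (Fin p → ℝ))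
    (R : QuadraticForm ℝ ((Fin p → ℝ) × (Fin n → ℝ)))
    (hQ : ∀ x : Fin p → ℝ, x ≠ 0 → 0 < Q x)
    (hR : ∀ y : Fin n → ℝ, y ≠ 0 → 0 < R (0, y)) :
    ∃ κ > (0:ℝ), ∀ v : (Fin p → ℝ) × (Fin n → ℝ), v ≠ 0 →
      0 < κ * Q v.1 + R v := by
  obtain ⟨q, hq, hQge⟩ := aux_coercive Q hQ
  -- coercivity of y ↦ R(0,y)
  have hR2 : ∀ y : Fin n → ℝ, y ≠ 0 →
      0 < (R.comp (LinearMap.inr ℝ (Fin p → ℝ) (Fin n → ℝ))) y := by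
    intro y hy
    simpa [QuadraticMap.comp_apply] using hR y hy
  obtain ⟨c, hc, hcge⟩ := aux_coercive _ hR2
  have hcge' : ∀ y : Fin n → ℝ, c * ‖y‖ ^ 2 ≤ R (0, y) := by
    intro y
    simpa [QuadraticMap.comp_apply] using hcge y
  -- bilinear bounds
  set B := QuadraticMap.polarBilin R with hB
  obtain ⟨C1, hC1, hC1le⟩ :=
    aux_bilin_bound ((B ∘ₗ (LinearMap.inl ℝ (Fin p → ℝ) (Fin n → ℝ))).compl₂
      (LinearMap.inl ℝ (Fin p → ℝ) (Fin n → ℝ)))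
  obtain ⟨C2, hC2, hC2le⟩ :=
    aux_bilin_bound ((B ∘ₗ (LinearMap.inl ℝ (Fin p → ℝ) (Fin n → ℝ))).compl₂
      (LinearMap.inr ℝ (Fin p → ℝ) (Fin n → ℝ)))
  -- bound on R(x,0)
  have hRx0 : ∀ x : Fin p → ℝ, -(C1 * ‖x‖ ^ 2) ≤ R (x, 0) := by
    intro x
    have h1 : QuadraticMap.polar R (x, (0:Fin n → ℝ)) (x, 0) = 2 * R (x, 0) := by
      have := QuadraticMap.polar_self R (x, (0:Fin n → ℝ))
      simpa [smul_eq_mul] using this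
    have h2 := hC1le x x
    have h3 : ((B ∘ₗ (LinearMap.inl ℝ (Fin p → ℝ) (Fin n → ℝ))).compl₂
        (LinearMap.inl ℝ (Fin p → ℝ) (Fin n → ℝ))) x x
        = QuadraticMap.polar R (x, 0) (x, 0) := rfl
    rw [h3, h1] at h2
    have := neg_abs_le (2 * R (x, 0))
    nlinarith [sq_nonneg ‖x‖, abs_nonneg (2 * R (x,0))]
  have hcross : ∀ (x : Fin p → ℝ) (y : Fin n → ℝ),
      -(C2 * ‖x‖ * ‖y‖) ≤ QuadraticMap.polar R (x, 0) (0, y) := by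
    intro x y
    have h2 := hC2le x y
    have h3 : ((B ∘ₗ (LinearMap.inl ℝ (Fin p → ℝ) (Fin n → ℝ))).compl₂
        (LinearMap.inr ℝ (Fin p → ℝ) (Fin n → ℝ))) x y
        = QuadraticMap.polar R (x, 0) (0, y) := rfl
    rw [h3] at h2
    have := neg_abs_le (QuadraticMap.polar R (x, 0) (0, y))
    linarith
  -- choose κ
  refine ⟨(c * C1 + C2 ^ 2 + c) / (c * q), by positivity, ?_⟩
  set κ := (c * C1 + C2 ^ 2 + c) / (c * q) with hκ
  have hκq : κ * (c * q) = c * C1 + C2 ^ 2 + c := by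
    rw [hκ]; field_simp
  have hκpos : (0:ℝ) < κ := by rw [hκ]; positivity
  rintro ⟨x, y⟩ hv
  -- decompose R (x,y)
  have hdecomp : R (x, y) = R (x, 0) + R (0, y) + QuadraticMap.polar R (x, 0) (0, y) := by
    have := QuadraticMap.map_add (⇑R) ((x, 0) : (Fin p → ℝ) × (Fin n → ℝ)) (0, y)
    simpa [Prod.mk_add_mk] using this
  have hQx : κ * (q * ‖x‖ ^ 2) ≤ κ * Q x :=
    mul_le_mul_of_nonneg_left (hQge x) hκpos.le
  have hxy : (0:ℝ) < ‖x‖ ∨ (0:ℝ) < ‖y‖ := by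
    rcases Prod.mk.injEq x y 0 0 ▸ (fun h => hv h : ¬ (x, y) = (0, 0)) with h
    by_contra hcon
    push_neg at hcon
    have hx0 : x = 0 := norm_le_zero_iff.mp hcon.1
    have hy0 : y = 0 := norm_le_zero_iff.mp hcon.2
    exact hv (by simp [hx0, hy0, Prod.ext_iff])
  have h1 := hRx0 x
  have h2 := hcge' y
  have h3 := hcross x y
  show 0 < κ * Q (x, y).1 + R (x, y)
  simp only
  rw [hdecomp]
  exact aux_arith hq hc hκq hκpos hQx h1 h2 h3 (norm_nonneg x) (norm_nonneg y) hxy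
end

section
/- There exists ε₀ > 0 such that for all ε with |ε| ≤ ε₀ and all θ ∈ ℝ, one has |(1 + e^{iθ})/2 + iε(e^{iθ} - 1)²| ≤ 1, with equality if and only if θ ≡ 0 modulo 2π. -/
noncomputable def gEps (ε θ : ℝ) : ℂ :=
  (1 + Complex.exp (θ * Complex.I)) / 2 + Complex.I * ε * (Complex.exp (θ * Complex.I) - 1) ^ 2

/-! With `t = 1 - cos θ`, `‖gEps ε θ‖² = 1 - t/2 + 2ε t sin θ + 4ε²t²`. Since `0 ≤ t ≤ 2`,
the linear term `-t/2` dominates the perturbation once `|ε| ≤ 1/10`, giving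
`‖gEps ε θ‖² ≤ 1 - t/5`; so the norm is at most `1`, with equality exactly when `t = 0`. -/

open Real

lemma sq_norm_gEps (ε θ : ℝ) :
    ‖gEps ε θ‖ ^ 2 =
      1 - (1 - cos θ) / 2 + 2 * ε * sin θ * (1 - cos θ) + 4 * ε ^ 2 * (1 - cos θ) ^ 2 := by
  rw [Complex.sq_norm]
  simp only [gEps, Complex.exp_mul_I, ← Complex.ofReal_cos, ← Complex.ofReal_sin,
    Complex.normSq_apply, Complex.add_re, Complex.add_im, Complex.div_re, Complex.div_im,
    Complex.mul_re, Complex.mul_im, Complex.one_re, Complex.one_im, Complex.I_re, Complex.I_im,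
    Complex.ofReal_re, Complex.ofReal_im, Complex.sub_re, Complex.sub_im,
    Complex.re_ofNat, Complex.im_ofNat, pow_two]
  linear_combination (1 / 4 - ε * sin θ + ε ^ 2 * (sin θ ^ 2 + cos θ ^ 2 + 3 - 4 * cos θ))
    * sin_sq_add_cos_sq θ

lemma sq_norm_gEps_le {ε : ℝ} (hε : |ε| ≤ 1 / 10) (θ : ℝ) :
    ‖gEps ε θ‖ ^ 2 ≤ 1 - (1 - cos θ) / 5 := by
  have ht0 : 0 ≤ 1 - cos θ := by linarith [cos_le_one θ]
  have ht2 : 1 - cos θ ≤ 2 := by linarith [neg_one_le_cos θ]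
  have h_sin : ε * sin θ ≤ 1 / 10 := by
    calc ε * sin θ ≤ |ε| * |sin θ| := (le_abs_self _).trans (abs_mul _ _).le
      _ ≤ 1 / 10 * 1 := mul_le_mul hε (abs_sin_le_one θ) (abs_nonneg _) (by norm_num)
      _ = 1 / 10 := by norm_num
  have h_sq : ε ^ 2 ≤ 1 / 100 := by
    rw [← sq_abs]; nlinarith [abs_nonneg ε]
  rw [sq_norm_gEps]
  nlinarith [mul_le_mul_of_nonneg_right h_sin ht0,
    mul_le_mul_of_nonneg_right h_sq (sq_nonneg (1 - cos θ)), mul_nonneg ht0 (sub_nonneg.2 ht2)]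

lemma cos_eq_one_iff_exists_eq_two_pi_mul (θ : ℝ) :
    cos θ = 1 ↔ ∃ k : ℤ, θ = 2 * π * k := by
  rw [cos_eq_one_iff]
  simp only [mul_comm (2 * π), eq_comm]

theorem exists_eps0_selfmap :
    ∃ ε₀ > (0:ℝ), ∀ ε : ℝ, |ε| ≤ ε₀ → ∀ θ : ℝ,
      ‖gEps ε θ‖ ≤ 1 ∧
      (‖gEps ε θ‖ = 1 ↔ ∃ k : ℤ, θ = 2 * Real.pi * k) := by
  refine ⟨1 / 10, by norm_num, fun ε hε θ => ?_⟩
  have h_le := sq_norm_gEps_le hε θ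
  have h_cos := cos_le_one θ
  have h_norm := norm_nonneg (gEps ε θ)
  rw [← cos_eq_one_iff_exists_eq_two_pi_mul, ← pow_eq_one_iff_of_nonneg h_norm two_ne_zero]
  refine ⟨by nlinarith, fun h_one => by linarith, fun h_cos_one => ?_⟩
  rw [sq_norm_gEps, h_cos_one]
  ring
end

section
/- For all z in the closed unit disc of ℂ, |3 + 6z - z²| ≤ 8, with equality if and only if z = 1. -/
/-!
Writing `x = Re z`, a direct expansion gives
`‖3 + 6z - z²‖² = 64 - 12 (1 - x)² - (1 - ‖z‖²)(43 + ‖z‖² - 12x)`.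
On the closed unit disc both subtracted terms are nonnegative (as `x ≤ 1`), so the norm is at
most `8`, and equality forces `x = 1`, which in the disc only `z = 1` attains.
-/

namespace Complex

theorem norm_three_add_six_mul_sub_sq_sq (z : ℂ) :
    ‖3 + 6 * z - z ^ 2‖ ^ 2 =
      64 - 12 * (1 - z.re) ^ 2 - (1 - ‖z‖ ^ 2) * (43 + ‖z‖ ^ 2 - 12 * z.re) := by
  rw [← normSq_eq_norm_sq, ← normSq_eq_norm_sq]
  simp only [normSq_apply, sub_re, sub_im, add_re, add_im, mul_re, mul_im, pow_two, re_ofNat,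
    im_ofNat]
  ring

theorem eq_of_re_eq_of_norm_le {z : ℂ} {r : ℝ} (hz : ‖z‖ ≤ r) (hre : z.re = r) : z = r := by
  have him : z.im = 0 := by
    rw [← abs_re_eq_norm]
    linarith [re_le_norm z, abs_re_le_norm z, le_abs_self z.re]
  exact ext (by simpa using hre) (by simpa using him)

end Complex

theorem abs_three_add_six_sub_sq (z : ℂ) (hz : ‖z‖ ≤ 1) :
    ‖3 + 6 * z - z ^ 2‖ ≤ 8 ∧
    (‖3 + 6 * z - z ^ 2‖ = 8 ↔ z = 1) := by
  have hre : z.re ≤ 1 := (Complex.re_le_norm z).trans hz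
  have hz_sq : ‖z‖ ^ 2 ≤ 1 := pow_le_one₀ (norm_nonneg z) hz
  have hdefect : 0 ≤ (1 - ‖z‖ ^ 2) * (43 + ‖z‖ ^ 2 - 12 * z.re) :=
    mul_nonneg (by linarith) (by nlinarith [sq_nonneg ‖z‖])
  have hexpand := Complex.norm_three_add_six_mul_sub_sq_sq z
  have hle : ‖3 + 6 * z - z ^ 2‖ ≤ 8 := by
    nlinarith [norm_nonneg (3 + 6 * z - z ^ 2), sq_nonneg (1 - z.re)]
  refine ⟨hle, ⟨fun h8 => ?_, fun h1 => by subst h1; norm_num⟩⟩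
  have hre_eq : z.re = 1 := by
    rw [h8] at hexpand
    nlinarith [sq_nonneg (1 - z.re)]
  simpa using Complex.eq_of_re_eq_of_norm_le hz hre_eq
end

section
/- For all θ ∈ ℝ, the inequality (3 + 6cos θ - cos 2θ)² + (6 sin θ - sin 2θ)² ≤ 64 holds, with equality if and only if θ ≡ 0 modulo 2π. -/
theorem trig_inequality_64 (θ : ℝ) :
    (3 + 6 * Real.cos θ - Real.cos (2 * θ)) ^ 2 +
      (6 * Real.sin θ - Real.sin (2 * θ)) ^ 2 ≤ 64 ∧
    ((3 + 6 * Real.cos θ - Real.cos (2 * θ)) ^ 2 +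
      (6 * Real.sin θ - Real.sin (2 * θ)) ^ 2 = 64 ↔ ∃ k : ℤ, θ = 2 * Real.pi * k) := by
  have hs : Real.sin θ ^ 2 = 1 - Real.cos θ ^ 2 := Real.sin_sq θ
  have key : (3 + 6 * Real.cos θ - Real.cos (2 * θ)) ^ 2 +
      (6 * Real.sin θ - Real.sin (2 * θ)) ^ 2 = 64 - 12 * (Real.cos θ - 1) ^ 2 := by
    rw [Real.cos_two_mul, Real.sin_two_mul]
    nlinarith [hs, sq_nonneg (Real.sin θ), sq_nonneg (Real.cos θ)]
  rw [key]
  constructor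
  · nlinarith [sq_nonneg (Real.cos θ - 1)]
  · constructor
    · intro h
      have hc : Real.cos θ = 1 := by nlinarith [sq_nonneg (Real.cos θ - 1)]
      obtain ⟨n, hn⟩ := Real.cos_eq_one_iff θ |>.mp hc
      exact ⟨n, by linarith [hn]⟩
    · rintro ⟨k, rfl⟩
      have : Real.cos (2 * Real.pi * k) = 1 := by
        have := Real.cos_eq_one_iff (2 * Real.pi * k)
        exact this.mpr ⟨k, by ring⟩
      rw [this]; ring
end

section
/- Let φ : closure(𝔻³) → closure(𝔻) be continuous, holomorphic on 𝔻³, and C¹ on the closed tridisc, with φ(1,1,1) = 1. Then for each k ∈ {1,2,3}, the partial derivative ∂φ/∂z_k at (1,1,1) is a nonnegative real number. -/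
/-!
The real derivative of `φ` is continuous up to the boundary of the closed tridisc and
`ℂ`-linear inside it, hence `ℂ`-linear at `e` too; so the slice `w ↦ φ(e + (w - 1) e_k)` has a
complex derivative `d` at `1` relative to the closed disc. Its real part `Re φ` is maximal at `1`
on the closed disc. Approaching `1` along the radius gives `Re d ≥ 0`, and running along the unit
circle, where `θ ↦ Re φ(e^{iθ})` has an interior maximum at `θ = 0`, gives `Re (i d) = 0`.
-/

open Complex Metric

theorem HasFDerivWithinAt.hasDerivWithinAt_of_map_I_smul {F : Type*} [NormedAddCommGroup F]
    [NormedSpace ℂ F] {f : ℂ → F} {L : ℂ →L[ℝ] F} {s : Set ℂ} {x : ℂ}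
    (h : HasFDerivWithinAt f L s x) (hL : ∀ v, L (I • v) = I • L v) :
    HasDerivWithinAt f (L 1) s x := by
  refine h.of_restrictScalars ℝ (ContinuousLinearMap.ext fun w => ?_)
  calc w • L 1 = w.re • L 1 + w.im • (I • L 1) := by
        conv_lhs => rw [← re_add_im w]
        rw [add_smul, mul_smul, coe_smul, coe_smul]
    _ = L (w.re • (1 : ℂ) + w.im • (I • (1 : ℂ))) := by rw [map_add, map_smul, map_smul, hL]
    _ = L w := by congr 1; simpa [mul_comm] using re_add_im w

theorem fderivWithin_closure_map_I_smul {E F : Type*} [NormedAddCommGroup E] [NormedSpace ℂ E]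
    [NormedAddCommGroup F] [NormedSpace ℂ F] {f : E → F} {U : Set E} (hU : IsOpen U)
    (hUd : UniqueDiffOn ℝ (closure U)) (hC1 : ContDiffOn ℝ 1 f (closure U))
    (hhol : DifferentiableOn ℂ f U) {x : E} (hx : x ∈ closure U) (v : E) :
    fderivWithin ℝ f (closure U) x (I • v) = I • fderivWithin ℝ f (closure U) x v := by
  have hcont := hC1.continuousOn_fderivWithin hUd le_rfl
  refine Set.EqOn.of_subset_closure (fun y hy => ?_) (hcont.clm_apply continuousOn_const)
    ((hcont.clm_apply continuousOn_const).const_smul I) subset_closure subset_rfl hx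
  have hy' : HasFDerivAt f ((fderiv ℂ f y).restrictScalars ℝ) y :=
    ((hhol y hy).differentiableAt (hU.mem_nhds hy)).hasFDerivAt.restrictScalars ℝ
  simp [fderivWithin_of_mem_nhds (Filter.mem_of_superset (hU.mem_nhds hy) subset_closure),
    hy'.fderiv]

theorem mapsTo_update_closedBall {ι : Type*} [Fintype ι] [DecidableEq ι] {E : ι → Type*}
    [∀ i, SeminormedAddCommGroup (E i)] {z : ∀ i, E i} {r : ℝ} (hz : z ∈ closedBall 0 r)
    (k : ι) : Set.MapsTo (Function.update z k) (closedBall 0 r) (closedBall 0 r) := by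
  intro w hw
  have hr : 0 ≤ r := nonempty_closedBall.mp ⟨z, hz⟩
  rw [mem_closedBall_zero_iff, pi_norm_le_iff_of_nonneg hr] at hz ⊢
  intro j
  rcases eq_or_ne j k with rfl | hj
  · simpa using hw
  · simpa [hj] using hz j

theorem hasDerivWithinAt_update_of_contDiffOn_closedBall {ι F : Type*} [Fintype ι]
    [DecidableEq ι] [NormedAddCommGroup F] [NormedSpace ℂ F] {f : (ι → ℂ) → F}
    (hC1 : ContDiffOn ℝ 1 f (closedBall 0 1)) (hhol : DifferentiableOn ℂ f (ball 0 1))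
    {z : ι → ℂ} (hz : z ∈ closedBall 0 1) (k : ι) :
    HasDerivWithinAt (fun w => f (Function.update z k w))
      (fderivWithin ℝ f (closedBall 0 1) z (Pi.single k 1)) (closedBall 0 1) (z k) := by
  have hclos : closure (ball (0 : ι → ℂ) 1) = closedBall 0 1 := closure_ball 0 one_ne_zero
  have hUd : UniqueDiffOn ℝ (closedBall (0 : ι → ℂ) 1) :=
    uniqueDiffOn_convex (convex_closedBall 0 1)
      ⟨0, ball_subset_interior_closedBall (mem_ball_self one_pos)⟩
  have hI := fderivWithin_closure_map_I_smul isOpen_ball (hclos ▸ hUd) (hclos ▸ hC1) hhol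
    (hclos ▸ hz)
  rw [hclos] at hI
  have hf : HasFDerivWithinAt f (fderivWithin ℝ f (closedBall 0 1) z) (closedBall 0 1)
      (Function.update z k (z k)) := by
    rw [Function.update_eq_self]
    exact (hC1.differentiableOn one_ne_zero z hz).hasFDerivWithinAt
  have hcomp := hf.comp (z k) (hasFDerivAt_update (𝕜 := ℝ) z (z k)).hasFDerivWithinAt
    (mapsTo_update_closedBall hz k)
  have hP : ∀ v : ℂ, ContinuousLinearMap.pi
      (Pi.single k (ContinuousLinearMap.id ℝ ℂ) : ∀ _ : ι, ℂ →L[ℝ] ℂ) v = Pi.single k v := by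
    intro v
    ext j
    rcases eq_or_ne j k with rfl | hj <;> simp [*]
  have hslice := hcomp.hasDerivWithinAt_of_map_I_smul fun v => by
    rw [ContinuousLinearMap.comp_apply, ContinuousLinearMap.comp_apply, hP, hP, Pi.single_smul]
    exact hI _
  rwa [ContinuousLinearMap.comp_apply, hP] at hslice

theorem HasDerivWithinAt.re_nonneg_of_isMaxOn_closedBall {f : ℂ → ℂ} {d : ℂ}
    (h : HasDerivWithinAt f d (closedBall 0 1) 1)
    (hmax : IsMaxOn (fun w => (f w).re) (closedBall 0 1) 1) : 0 ≤ d.re := by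
  have hre : HasFDerivWithinAt (fun w => (f w).re)
      (reCLM.comp ((ContinuousLinearMap.toSpanSingleton ℂ d).restrictScalars ℝ))
      (closedBall 0 1) 1 :=
    reCLM.hasFDerivAt.comp_hasFDerivWithinAt 1 (h.hasFDerivWithinAt.restrictScalars ℝ)
  have hcone : (0 : ℂ) - 1 ∈ posTangentConeAt (closedBall (0 : ℂ) 1) 1 :=
    sub_mem_posTangentConeAt_of_segment_subset
      ((convex_closedBall 0 1).segment_subset (by simp) (by simp))
  simpa using hmax.localize.hasFDerivWithinAt_nonpos hre hcone

theorem HasDerivWithinAt.im_eq_zero_of_isMaxOn_closedBall {f : ℂ → ℂ} {d : ℂ}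
    (h : HasDerivWithinAt f d (closedBall 0 1) 1)
    (hmax : IsMaxOn (fun w => (f w).re) (closedBall 0 1) 1) : d.im = 0 := by
  set γ : ℝ → ℂ := fun θ => cexp ((θ : ℂ) * I)
  have hγ : HasDerivAt γ I 0 := by
    simpa using ((ofRealCLM.hasDerivAt (x := (0 : ℝ))).mul_const I).cexp
  have hγS : ∀ θ, γ θ ∈ closedBall 0 1 := fun θ => by simp [γ, norm_exp_ofReal_mul_I]
  have hγ0 : γ 0 = 1 := by simp [γ]
  have hcomp : HasDerivAt (fun θ => (f (γ θ)).re) (d * I).re 0 :=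
    reCLM.hasFDerivAt.comp_hasDerivAt 0
      (h.comp_hasDerivAt_of_eq 0 hγ (Filter.Eventually.of_forall hγS) hγ0.symm)
  have hloc : IsLocalMax (fun θ => (f (γ θ)).re) 0 :=
    Filter.Eventually.of_forall fun θ => by simpa [hγ0] using hmax (hγS θ)
  simpa using hloc.hasDerivAt_eq_zero hcomp

theorem julia_caratheodory_tridisc_nonneg_general (φ : (Fin 3 → ℂ) → ℂ)
    (hmap : ∀ z : Fin 3 → ℂ, (∀ k, ‖z k‖ ≤ 1) → ‖φ z‖ ≤ 1)
    (hhol : DifferentiableOn ℂ φ {z : Fin 3 → ℂ | ∀ k, ‖z k‖ < 1})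
    (hC1 : ContDiffOn ℝ 1 φ {z : Fin 3 → ℂ | ∀ k, ‖z k‖ ≤ 1})
    (he : φ (fun _ => 1) = 1) :
    ∀ k : Fin 3, ∃ dk : ℂ,
      HasDerivWithinAt (fun w : ℂ => φ (Function.update (fun _ : Fin 3 => (1:ℂ)) k w)) dk
        {w : ℂ | ‖w‖ ≤ 1} 1 ∧ dk.im = 0 ∧ 0 ≤ dk.re := by
  intro k
  have hpoly : {z : Fin 3 → ℂ | ∀ k, ‖z k‖ ≤ 1} = closedBall 0 1 := by
    ext z; simp [pi_norm_le_iff_of_nonneg]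
  have hpoly' : {z : Fin 3 → ℂ | ∀ k, ‖z k‖ < 1} = ball 0 1 := by
    ext z; simp [pi_norm_lt_iff]
  have hdisc : {w : ℂ | ‖w‖ ≤ 1} = closedBall 0 1 := by
    ext w; simp
  have he_mem : (fun _ => 1 : Fin 3 → ℂ) ∈ closedBall 0 1 := by simp
  rw [hpoly] at hC1
  rw [hpoly'] at hhol
  rw [hdisc]
  have hd := hasDerivWithinAt_update_of_contDiffOn_closedBall hC1 hhol he_mem k
  have hmax : IsMaxOn (fun w => (φ (Function.update (fun _ => 1) k w)).re) (closedBall 0 1) 1 :=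
    fun w hw => by
      have hw' := mapsTo_update_closedBall he_mem k hw
      rw [← hpoly] at hw'
      simpa [he] using (re_le_norm _).trans (hmap _ hw')
  exact ⟨_, hd, hd.im_eq_zero_of_isMaxOn_closedBall hmax, hd.re_nonneg_of_isMaxOn_closedBall hmax⟩

/-- Julia–Carathéodory type lemma on the tridisc: the partial derivatives at `e = (1,1,1)`
are nonnegative real numbers. -/
theorem julia_caratheodory_tridisc_nonneg (φ : (Fin 3 → ℂ) → ℂ)
    (hmap : ∀ z : Fin 3 → ℂ, (∀ k, ‖z k‖ ≤ 1) → ‖φ z‖ ≤ 1)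
    (hcont : ContinuousOn φ {z : Fin 3 → ℂ | ∀ k, ‖z k‖ ≤ 1})
    (hhol : DifferentiableOn ℂ φ {z : Fin 3 → ℂ | ∀ k, ‖z k‖ < 1})
    (hC1 : ContDiffOn ℝ 1 φ {z : Fin 3 → ℂ | ∀ k, ‖z k‖ ≤ 1})
    (he : φ (fun _ => 1) = 1) :
    ∀ k : Fin 3, ∃ dk : ℂ,
      HasDerivWithinAt (fun w : ℂ => φ (Function.update (fun _ : Fin 3 => (1:ℂ)) k w)) dk
        {w : ℂ | ‖w‖ ≤ 1} 1 ∧ dk.im = 0 ∧ 0 ≤ dk.re :=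
  julia_caratheodory_tridisc_nonneg_general φ hmap hhol hC1 he
end
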